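/- arXiv:2601.00737 — 3 statements merged into one kernel-verified Lean document; each statement's English description precedes it below -/
import Mathlib

section
/- Let (Ω, P) be a probability space, A a finite measure space of actions with measure da, α̃ > 0, and Q : Ω × A → ℝ jointly measurable such that for each a, Q(·,a) is sub-Gaussian with mean μ(a) and variance proxy σ²(a), and the relevant integrals are finite. Then E_ω[ α̃ · log( ∫_A exp(Q(ω,a)/α̃) da ) ] ≤ α̃ · log( ∫_A exp( μ(a)/α̃ + σ²(a)/(2α̃²) ) da ). -/
open MeasureTheory Real

/-! Jensen's inequality for the concave logarithm gives `E[log Z] ≤ log E[Z]` for the partition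
function `Z(ω) = ∫ exp(Q(ω,a)/α̃) da`. By Tonelli, `E[Z] = ∫ E[exp(Q(·,a)/α̃)] da`, and the
sub-Gaussian moment generating function bound at `λ = 1/α̃` controls the inner expectation by
`exp(μ(a)/α̃ + σ²(a)/(2α̃²))`. -/

theorem exp_integral_log_le_integral {α : Type*} [MeasurableSpace α] {μ : Measure α}
    [IsProbabilityMeasure μ] {f : α → ℝ} (hpos : ∀ᵐ x ∂μ, 0 < f x) (hf : Integrable f μ)
    (hlog : Integrable (fun x => log (f x)) μ) :
    exp (∫ x, log (f x) ∂μ) ≤ ∫ x, f x ∂μ := by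
  have hexp_log : (fun x => exp (log (f x))) =ᵐ[μ] f := hpos.mono fun x hx => exp_log hx
  calc exp (∫ x, log (f x) ∂μ)
      ≤ ∫ x, exp (log (f x)) ∂μ :=
        convexOn_exp.map_integral_le continuous_exp.continuousOn isClosed_univ
          (.of_forall fun _ => Set.mem_univ _) hlog (hf.congr hexp_log.symm)
    _ = ∫ x, f x ∂μ := integral_congr_ae hexp_log

theorem integral_exp_div_le_of_mgf_le {Ω : Type*} [MeasurableSpace Ω] {P : Measure Ω}
    {X : Ω → ℝ} {m s : ℝ} (hmgf : ∀ l : ℝ, ∫ ω, exp (l * X ω) ∂P ≤ exp (l * m + l ^ 2 * s / 2))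
    (c : ℝ) : ∫ ω, exp (X ω / c) ∂P ≤ exp (m / c + s / (2 * c ^ 2)) := by
  convert hmgf c⁻¹ using 3 <;> field_simp

theorem subGaussian_soft_backup_bound_general {Ω A : Type*} [MeasurableSpace Ω] [MeasurableSpace A]
    (P : Measure Ω) [IsProbabilityMeasure P] (ν : Measure A) [IsFiniteMeasure ν]
    (alpha : ℝ) (halpha : 0 < alpha) (Q : Ω → A → ℝ) (μ σ2 : A → ℝ)
    (hsub : ∀ a, ∀ l : ℝ,
      ∫ ω, Real.exp (l * Q ω a) ∂P ≤ Real.exp (l * μ a + l ^ 2 * σ2 a / 2))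
    (hint : Integrable (Function.uncurry fun ω a => Real.exp (Q ω a / alpha)) (P.prod ν))
    (hlogint : Integrable (fun ω => Real.log (∫ a, Real.exp (Q ω a / alpha) ∂ν)) P)
    (hrhs : Integrable (fun a => Real.exp (μ a / alpha + σ2 a / (2 * alpha ^ 2))) ν) :
    ∫ ω, alpha * Real.log (∫ a, Real.exp (Q ω a / alpha) ∂ν) ∂P
      ≤ alpha * Real.log (∫ a, Real.exp (μ a / alpha + σ2 a / (2 * alpha ^ 2)) ∂ν) := by
  rcases eq_zero_or_neZero ν with rfl | _
  · simp
  have hZ_pos : ∀ᵐ ω ∂P, 0 < ∫ a, exp (Q ω a / alpha) ∂ν :=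
    hint.prod_right_ae.mono fun _ h => integral_exp_pos h
  have hEZ_le : ∫ ω, ∫ a, exp (Q ω a / alpha) ∂ν ∂P
      ≤ ∫ a, exp (μ a / alpha + σ2 a / (2 * alpha ^ 2)) ∂ν := by
    rw [integral_integral_swap hint]
    exact integral_mono hint.integral_prod_right hrhs fun a =>
      integral_exp_div_le_of_mgf_le (hsub a) alpha
  rw [integral_const_mul]
  gcongr
  rw [le_log_iff_exp_le (integral_exp_pos hrhs)]
  exact (exp_integral_log_le_integral hZ_pos hint.integral_prod_left hlogint).trans hEZ_le

/-- Core of the overestimation theorem: if `Q(·,a)` is sub-Gaussian with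
mean `μ(a)` and variance proxy `σ²(a)` for each action `a`, then
`E_ω[α̃ log ∫ exp(Q(ω,a)/α̃) da] ≤ α̃ log ∫ exp(μ(a)/α̃ + σ²(a)/(2α̃²)) da`. -/
theorem subGaussian_soft_backup_bound {Ω A : Type*} [MeasurableSpace Ω] [MeasurableSpace A]
    (P : Measure Ω) [IsProbabilityMeasure P] (ν : Measure A) [IsFiniteMeasure ν]
    (alpha : ℝ) (halpha : 0 < alpha) (Q : Ω → A → ℝ) (μ σ2 : A → ℝ)
    (hmeas : Measurable (Function.uncurry Q)) (hμ : Measurable μ) (hσ2 : Measurable σ2)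
    (hmean : ∀ a, ∫ ω, Q ω a ∂P = μ a)
    (hsub : ∀ a, ∀ l : ℝ,
      ∫ ω, Real.exp (l * Q ω a) ∂P ≤ Real.exp (l * μ a + l ^ 2 * σ2 a / 2))
    (hint : Integrable (Function.uncurry fun ω a => Real.exp (Q ω a / alpha)) (P.prod ν))
    (hlogint : Integrable (fun ω => Real.log (∫ a, Real.exp (Q ω a / alpha) ∂ν)) P)
    (hrhs : Integrable (fun a => Real.exp (μ a / alpha + σ2 a / (2 * alpha ^ 2))) ν) :
    ∫ ω, alpha * Real.log (∫ a, Real.exp (Q ω a / alpha) ∂ν) ∂P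
      ≤ alpha * Real.log (∫ a, Real.exp (μ a / alpha + σ2 a / (2 * alpha ^ 2)) ∂ν) :=
  subGaussian_soft_backup_bound_general P ν alpha halpha Q μ σ2 hsub hint hlogint hrhs
end

section
/- Let r, γ ≥ 0 and α̃ > 0 be constants, A a finite measure space, and Q : Ω × A → ℝ jointly measurable such that for each a, Q(·,a) is sub-Gaussian with mean μ(a) and variance proxy σ²(a), with all relevant integrals finite. Define the soft Bellman optimality backup T*Q = r + γ · E_ω[ α̃ log ∫_A exp(Q(ω,a)/α̃) da ]. Then T*Q ≤ r + γ · α̃ · log ∫_A exp( μ(a)/α̃ + σ²(a)/(2α̃²) ) da. -/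
/-!
Jensen's inequality for the concave `log` moves `E_ω` inside the logarithm, Fubini exchanges
`E_ω` with `∫_A`, and the sub-Gaussian moment bound at `λ = 1/α̃` controls each
`E_ω exp(Q(ω,a)/α̃)`.
-/

open MeasureTheory Real

section

variable {α : Type*} [MeasurableSpace α] {μ : Measure α} {f : α → ℝ}

theorem integral_pos_of_ae_pos [NeZero μ] (hf : ∀ᵐ x ∂μ, 0 < f x) (hfi : Integrable f μ) :
    0 < ∫ x, f x ∂μ := by
  rw [integral_pos_iff_support_of_nonneg_ae (hf.mono fun _ h => h.le) hfi, pos_iff_ne_zero]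
  intro hsupp
  have hfalse : ∀ᵐ x ∂μ, False := by
    filter_upwards [hf, measure_eq_zero_iff_ae_notMem.1 hsupp] with x hpos hnot
    exact hnot hpos.ne'
  exact NeZero.ne μ (ae_eq_bot.1 (Filter.eventually_false_iff_eq_bot.1 hfalse))

/-- `ConcaveOn.le_map_integral` needs a closed domain, so we use the tangent line of `log`
at `c = ∫ f` instead. -/
theorem integral_log_le_log_integral [IsProbabilityMeasure μ] (hf : ∀ᵐ x ∂μ, 0 < f x)
    (hfi : Integrable f μ) (hlog : Integrable (fun x => log (f x)) μ) :
    ∫ x, log (f x) ∂μ ≤ log (∫ x, f x ∂μ) := by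
  set c := ∫ x, f x ∂μ
  have hc : 0 < c := integral_pos_of_ae_pos hf hfi
  have htangent : ∀ᵐ x ∂μ, log (f x) ≤ f x / c - 1 + log c := by
    filter_upwards [hf] with x hx
    have hratio := log_le_sub_one_of_pos (div_pos hx hc)
    rw [log_div hx.ne' hc.ne'] at hratio
    linarith
  have hsub_int : Integrable (fun x => f x / c - 1) μ :=
    (hfi.div_const c).sub (integrable_const 1)
  calc ∫ x, log (f x) ∂μ ≤ ∫ x, (f x / c - 1 + log c) ∂μ :=
        integral_mono_ae hlog (hsub_int.add (integrable_const _)) htangent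
    _ = log c := by
        rw [integral_add hsub_int (integrable_const _),
          integral_sub (hfi.div_const c) (integrable_const 1), integral_div, div_self hc.ne']
        simp

end

theorem integral_exp_div_le_of_integral_exp_mul_le {Ω : Type*} [MeasurableSpace Ω]
    {P : Measure Ω} {X : Ω → ℝ} {m s : ℝ}
    (hX : ∀ l : ℝ, ∫ ω, exp (l * X ω) ∂P ≤ exp (l * m + l ^ 2 * s / 2)) (a : ℝ) :
    ∫ ω, exp (X ω / a) ∂P ≤ exp (m / a + s / (2 * a ^ 2)) := by
  convert hX a⁻¹ using 2
  · simp_rw [div_eq_inv_mul]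
  · ring

theorem overestimation_quantification_general {Ω A : Type*} [MeasurableSpace Ω] [MeasurableSpace A]
    (P : Measure Ω) [IsProbabilityMeasure P] (ν : Measure A) [IsFiniteMeasure ν]
    (r γ alpha : ℝ) (hγ : 0 ≤ γ) (halpha : 0 < alpha)
    (Q : Ω → A → ℝ) (μ σ2 : A → ℝ)
    (hsub : ∀ a, ∀ l : ℝ,
      ∫ ω, Real.exp (l * Q ω a) ∂P ≤ Real.exp (l * μ a + l ^ 2 * σ2 a / 2))
    (hint : Integrable (Function.uncurry fun ω a => Real.exp (Q ω a / alpha)) (P.prod ν))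
    (hlogint : Integrable (fun ω => Real.log (∫ a, Real.exp (Q ω a / alpha) ∂ν)) P)
    (hrhs : Integrable (fun a => Real.exp (μ a / alpha + σ2 a / (2 * alpha ^ 2))) ν) :
    r + γ * ∫ ω, alpha * Real.log (∫ a, Real.exp (Q ω a / alpha) ∂ν) ∂P
      ≤ r + γ * (alpha * Real.log (∫ a, Real.exp (μ a / alpha + σ2 a / (2 * alpha ^ 2)) ∂ν)) := by
  rcases eq_zero_or_neZero ν with rfl | _
  · simp
  set I : Ω → ℝ := fun ω => ∫ a, exp (Q ω a / alpha) ∂ν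
  have hI_pos : ∀ᵐ ω ∂P, 0 < I ω := hint.prod_right_ae.mono fun _ h => integral_exp_pos h
  have hI_int : Integrable I P := hint.integral_prod_left
  have hI_le : ∫ ω, I ω ∂P ≤ ∫ a, exp (μ a / alpha + σ2 a / (2 * alpha ^ 2)) ∂ν := by
    rw [integral_integral_swap hint]
    exact integral_mono hint.integral_prod_right hrhs fun a =>
      integral_exp_div_le_of_integral_exp_mul_le (hsub a) alpha
  have hsoftmax : ∫ ω, alpha * log (I ω) ∂P
      ≤ alpha * log (∫ a, exp (μ a / alpha + σ2 a / (2 * alpha ^ 2)) ∂ν) := by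
    rw [integral_const_mul]
    gcongr
    calc ∫ ω, log (I ω) ∂P ≤ log (∫ ω, I ω ∂P) :=
          integral_log_le_log_integral hI_pos hI_int hlogint
      _ ≤ _ := log_le_log (integral_pos_of_ae_pos hI_pos hI_int) hI_le
  gcongr

/-- Theorem 1 of the paper, fixed state-action pair: the soft Bellman
optimality backup `T*Q = r + γ E_ω[α̃ log ∫ exp(Q(ω,a)/α̃) da]` of a sub-Gaussian
critic satisfies `T*Q ≤ r + γ α̃ log ∫ exp(μ(a)/α̃ + σ²(a)/(2α̃²)) da`. -/
theorem overestimation_quantification {Ω A : Type*} [MeasurableSpace Ω] [MeasurableSpace A]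
    (P : Measure Ω) [IsProbabilityMeasure P] (ν : Measure A) [IsFiniteMeasure ν]
    (r γ alpha : ℝ) (hr : 0 ≤ r) (hγ : 0 ≤ γ) (halpha : 0 < alpha)
    (Q : Ω → A → ℝ) (μ σ2 : A → ℝ)
    (hmeas : Measurable (Function.uncurry Q)) (hμ : Measurable μ) (hσ2 : Measurable σ2)
    (hmean : ∀ a, ∫ ω, Q ω a ∂P = μ a)
    (hsub : ∀ a, ∀ l : ℝ,
      ∫ ω, Real.exp (l * Q ω a) ∂P ≤ Real.exp (l * μ a + l ^ 2 * σ2 a / 2))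
    (hint : Integrable (Function.uncurry fun ω a => Real.exp (Q ω a / alpha)) (P.prod ν))
    (hlogint : Integrable (fun ω => Real.log (∫ a, Real.exp (Q ω a / alpha) ∂ν)) P)
    (hrhs : Integrable (fun a => Real.exp (μ a / alpha + σ2 a / (2 * alpha ^ 2))) ν) :
    r + γ * ∫ ω, alpha * Real.log (∫ a, Real.exp (Q ω a / alpha) ∂ν) ∂P
      ≤ r + γ * (alpha * Real.log (∫ a, Real.exp (μ a / alpha + σ2 a / (2 * alpha ^ 2)) ∂ν)) :=
  overestimation_quantification_general P ν r γ alpha hγ halpha Q μ σ2 hsub hint hlogint hrhs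
end

section
/- Let r ∈ ℝ, γ ∈ [0,1), α̃ > 0, A a finite measure space, and Q : Ω × A → ℝ jointly measurable such that for each a, Q(·,a) is sub-Gaussian with mean μ(a) and variance proxy σ²(a), with M := sup_a σ²(a) < ∞ and all relevant integrals finite. Define the overestimation error ε = E_ω[ α̃ log ∫_A exp(Q(ω,a)/α̃) da ] − α̃ log ∫_A exp(μ(a)/α̃) da. Then γ · ε ≤ (γ/(2α̃)) · M. -/
open MeasureTheory Real

/-- Theorem 2 of the paper, fixed next state: the overestimation error
`ε = E_ω[α̃ log ∫ exp(Q(ω,a)/α̃) da] − α̃ log ∫ exp(μ(a)/α̃) da` of the soft Bellman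
optimality backup of a sub-Gaussian critic satisfies `γ ε ≤ (γ/(2α̃)) M` where
`M = sup_a σ²(a)`. -/
theorem overestimation_bound {Ω A : Type*} [MeasurableSpace Ω] [MeasurableSpace A]
    (P : Measure Ω) [IsProbabilityMeasure P] (ν : Measure A) [IsFiniteMeasure ν]
    (r γ alpha : ℝ) (hγ0 : 0 ≤ γ) (hγ1 : γ < 1) (halpha : 0 < alpha)
    (Q : Ω → A → ℝ) (μ σ2 : A → ℝ)
    (hmeas : Measurable (Function.uncurry Q)) (hμ : Measurable μ) (hσ2 : Measurable σ2)
    (hmean : ∀ a, ∫ ω, Q ω a ∂P = μ a)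
    (hsub : ∀ a, ∀ l : ℝ,
      ∫ ω, Real.exp (l * Q ω a) ∂P ≤ Real.exp (l * μ a + l ^ 2 * σ2 a / 2))
    (hσ2nonneg : ∀ a, 0 ≤ σ2 a)
    (hbdd : BddAbove (Set.range σ2))
    (hint : Integrable (Function.uncurry fun ω a => Real.exp (Q ω a / alpha)) (P.prod ν))
    (hlogint : Integrable (fun ω => Real.log (∫ a, Real.exp (Q ω a / alpha) ∂ν)) P)
    (hμint : Integrable (fun a => Real.exp (μ a / alpha)) ν) :
    γ * ((∫ ω, alpha * Real.log (∫ a, Real.exp (Q ω a / alpha) ∂ν) ∂P)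
          - alpha * Real.log (∫ a, Real.exp (μ a / alpha) ∂ν))
      ≤ γ / (2 * alpha) * (⨆ a, σ2 a) := by
  set M : ℝ := ⨆ a, σ2 a with hM
  have hMnonneg : 0 ≤ M := by
    apply Real.sSup_nonneg
    rintro x ⟨a, rfl⟩; exact hσ2nonneg a
  have hMle : ∀ a, σ2 a ≤ M := fun a => le_ciSup hbdd a
  set c : ℝ := M / (2 * alpha ^ 2) with hc
  set Y : Ω → ℝ := fun ω => ∫ a, Real.exp (Q ω a / alpha) ∂ν with hY
  set I : ℝ := ∫ a, Real.exp (μ a / alpha) ∂ν with hI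
  show γ * ((∫ ω, alpha * Real.log (Y ω) ∂P) - alpha * Real.log I) ≤ γ / (2 * alpha) * M
  rcases eq_or_ne ν 0 with hν | hν
  · have hY0 : ∀ ω, Y ω = 0 := fun ω => by simp only [hY, hν, integral_zero_measure]
    have hI0 : I = 0 := by simp only [hI, hν, integral_zero_measure]
    simp only [hY0, hI0, Real.log_zero, mul_zero, integral_zero, sub_zero]
    exact mul_nonneg (div_nonneg hγ0 (by linarith)) hMnonneg
  -- ν ≠ 0
  have hνpos : 0 < ν Set.univ := Measure.measure_univ_pos.mpr hν
  have hIpos : 0 < I := by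
    rw [hI, integral_pos_iff_support_of_nonneg (fun a => (Real.exp_pos _).le) hμint]
    have : Function.support (fun a => Real.exp (μ a / alpha)) = Set.univ := by
      ext a; simp [Function.support, Real.exp_ne_zero]
    rwa [this]
  have hYint : Integrable Y P := hint.integral_prod_left
  have hYnonneg : ∀ ω, 0 ≤ Y ω := fun ω => integral_nonneg fun a => (Real.exp_pos _).le
  have hYpos : ∀ᵐ ω ∂P, 0 < Y ω := by
    filter_upwards [hint.prod_right_ae] with ω hω
    rw [hY]
    rw [integral_pos_iff_support_of_nonneg (fun a => (Real.exp_pos _).le) hω]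
    have : Function.support (fun a => Real.exp (Q ω a / alpha)) = Set.univ := by
      ext a; simp [Function.support, Real.exp_ne_zero]
    rwa [this]
  set m : ℝ := ∫ ω, Y ω ∂P with hm
  have hsupp : 0 < P (Function.support Y) := by
    rw [pos_iff_ne_zero]
    intro h0
    have hzero : ∀ᵐ ω ∂P, Y ω = 0 := by
      rw [ae_iff]; exact h0
    obtain ⟨ω, h1, h2⟩ := (hzero.and hYpos).exists
    exact absurd h1 (ne_of_gt h2)
  have hmpos : 0 < m :=
    (integral_pos_iff_support_of_nonneg (fun ω => hYnonneg ω) hYint).mpr hsupp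
  -- Fubini + sub-Gaussian bound
  have hswap : m = ∫ a, ∫ ω, Real.exp (Q ω a / alpha) ∂P ∂ν :=
    integral_integral_swap hint
  have hmle : m ≤ Real.exp c * I := by
    rw [hswap, hI, ← integral_const_mul]
    apply integral_mono_of_nonneg
    · exact Filter.Eventually.of_forall fun a => integral_nonneg fun ω => (Real.exp_pos _).le
    · exact hμint.const_mul _
    · apply Filter.Eventually.of_forall
      intro a
      show ∫ ω, Real.exp (Q ω a / alpha) ∂P ≤ Real.exp c * Real.exp (μ a / alpha)
      have h1 : ∫ ω, Real.exp (Q ω a / alpha) ∂P = ∫ ω, Real.exp ((1/alpha) * Q ω a) ∂P := by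
        congr 1; ext ω; rw [one_div_mul_eq_div]
      rw [h1]
      refine (hsub a (1/alpha)).trans ?_
      rw [← Real.exp_add]
      apply Real.exp_le_exp.mpr
      have h2 : (1/alpha) * μ a = μ a / alpha := one_div_mul_eq_div _ _
      have h3 : (1/alpha) ^ 2 * σ2 a / 2 ≤ c := by
        have h4 : (1/alpha) ^ 2 * σ2 a / 2 = σ2 a / (2 * alpha ^ 2) := by ring
        rw [h4, hc]
        gcongr
        exact hMle a
      linarith
  -- Jensen
  have hjensen : ∫ ω, Real.log (Y ω) ∂P ≤ Real.log m := by
    have hg2 : Integrable (fun ω => (Y ω - m) / m) P :=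
      (hYint.sub (integrable_const m)).div_const m
    have hgi : Integrable (fun ω => Real.log m + (Y ω - m) / m) P :=
      (integrable_const _).add hg2
    have hpt : (fun ω => Real.log (Y ω)) ≤ᵐ[P] fun ω => Real.log m + (Y ω - m) / m := by
      filter_upwards [hYpos] with ω h
      have h2 := Real.log_le_sub_one_of_pos (div_pos h hmpos)
      rw [Real.log_div h.ne' hmpos.ne'] at h2
      have h3 : Y ω / m - 1 = (Y ω - m) / m := by field_simp
      linarith [h3 ▸ h2]
    calc ∫ ω, Real.log (Y ω) ∂P ≤ ∫ ω, (Real.log m + (Y ω - m) / m) ∂P :=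
          integral_mono_ae hlogint hgi hpt
      _ = Real.log m := by
          rw [integral_add (integrable_const _) hg2, integral_const, integral_div,
            integral_sub hYint (integrable_const m), integral_const, ← hm]
          simp [measure_univ]
  have hlogm : Real.log m ≤ c + Real.log I := by
    calc Real.log m ≤ Real.log (Real.exp c * I) := Real.log_le_log hmpos hmle
      _ = c + Real.log I := by
          rw [Real.log_mul (Real.exp_ne_zero _) hIpos.ne', Real.log_exp]
  have hkey : ∫ ω, Real.log (Y ω) ∂P - Real.log I ≤ c := by linarith
  have hLHS : ∫ ω, alpha * Real.log (Y ω) ∂P = alpha * ∫ ω, Real.log (Y ω) ∂P :=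
    integral_const_mul alpha _
  rw [hLHS]
  have : γ * (alpha * ∫ ω, Real.log (Y ω) ∂P - alpha * Real.log I)
      = (γ * alpha) * (∫ ω, Real.log (Y ω) ∂P - Real.log I) := by ring
  rw [this]
  have h4 : (γ * alpha) * (∫ ω, Real.log (Y ω) ∂P - Real.log I) ≤ (γ * alpha) * c :=
    mul_le_mul_of_nonneg_left hkey (mul_nonneg hγ0 halpha.le)
  refine h4.trans_eq ?_
  rw [hc]
  field_simp
end
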